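/- Let G be a finite connected simple graph containing at least one cycle, and let e = {u_i, u_j} be an edge of G lying on a cycle. For k ≥ 2, construct G' on k disjoint copies of V(G) as follows: within each copy h (1 ≤ h ≤ k), include the edge between the copies of u_t and u_z iff {u_t, u_z} ∈ E(G) and {u_t,u_z} ≠ {u_i,u_j}; additionally, for each h (indices mod k), add an edge between the copy of u_i in copy h and the copy of u_j in copy h+1. Then G' is connected. -/
import Mathlib


/-- The `k`-copy cyclic gluing of a graph `G` along the edge `{ui, uj}`:
vertex set `ZMod k × V`; inside each copy all edges of `G` except `{ui, uj}`,
plus, for every `h : ZMod k`, an edge from the copy of `ui` in copy `h` to the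
copy of `uj` in copy `h + 1`. -/
def cyclicGluing {V : Type*} (G : SimpleGraph V) (ui uj : V) (k : ℕ) :
    SimpleGraph (ZMod k × V) :=
  SimpleGraph.fromRel (fun a b =>
    (a.1 = b.1 ∧ G.Adj a.2 b.2 ∧ s(a.2, b.2) ≠ s(ui, uj)) ∨
    (a.2 = ui ∧ b.2 = uj ∧ b.1 = a.1 + 1))

/-- If `G` is connected, `{ui, uj}` is an edge of `G` lying on a cycle (so that
`G` minus this edge is still connected), then for every `k ≥ 2` the `k`-copy
cyclic gluing of `G` along `{ui, uj}` is connected. -/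
theorem stmt_6 {V : Type*} [Fintype V] (G : SimpleGraph V) (ui uj : V) (k : ℕ)
    (hk : 2 ≤ k) (hconn : G.Connected) (hadj : G.Adj ui uj)
    (hcyc : (G.deleteEdges {s(ui, uj)}).Connected) :
    (cyclicGluing G ui uj k).Connected := by
  haveI : NeZero k := ⟨by omega⟩
  set G' := cyclicGluing G ui uj k with hG'
  have hA : ∀ (h : ZMod k) (v w : V), G'.Reachable (h, v) (h, w) := by
    intro h v w
    have hr := hcyc.preconnected v w
    refine hr.map ⟨fun v => (h, v), ?_⟩
    intro a b hab
    rw [SimpleGraph.deleteEdges_adj] at hab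
    show G'.Adj (h, a) (h, b)
    rw [hG', cyclicGluing, SimpleGraph.fromRel_adj]
    exact ⟨by simp [hab.1.ne], Or.inl (Or.inl ⟨rfl, hab.1, by simpa using hab.2⟩)⟩
  have hstep : ∀ h : ZMod k, G'.Adj (h, ui) (h + 1, uj) := by
    intro h
    rw [hG', cyclicGluing, SimpleGraph.fromRel_adj]
    exact ⟨by simp [Prod.ext_iff, hadj.ne], Or.inl (Or.inr ⟨rfl, rfl, rfl⟩)⟩
  have hreach0 : ∀ n : ℕ, G'.Reachable ((0 : ZMod k), ui) ((n : ZMod k), ui) := by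
    intro n
    induction n with
    | zero => rw [Nat.cast_zero]
    | succ n ih =>
      refine ih.trans ((hstep _).reachable.trans ?_)
      push_cast
      exact hA _ _ _
  rw [SimpleGraph.connected_iff]
  refine ⟨fun x y => ?_, ⟨((0 : ZMod k), ui)⟩⟩
  obtain ⟨m, hm⟩ := ZMod.natCast_rightInverse.surjective x.1
  obtain ⟨n, hn⟩ := ZMod.natCast_rightInverse.surjective y.1
  have hx : G'.Reachable ((0 : ZMod k), ui) x := by
    refine (hreach0 m).trans ?_
    rw [hm]
    exact hA x.1 ui x.2
  have hy : G'.Reachable ((0 : ZMod k), ui) y := by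
    refine (hreach0 n).trans ?_
    rw [hn]
    exact hA y.1 ui y.2
  exact hx.symm.trans hy
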